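/- arXiv:1308.6717 — 3 statements merged into one kernel-verified Lean document; each statement's English description precedes it below -/
import Mathlib

section
/- For every admissible subgroup L of ℤ × ℤ, the elongated-triangular torus graph G(L) has a contractible Hamiltonian cycle: there is a cycle C̃ in the infinite elongated-triangular graph G∞ such that the projection π (reduction of the first coordinate modulo L) maps C̃ isomorphically onto a Hamiltonian cycle of G(L). -/
/-- `e₁ = (1,0)` in `ℤ × ℤ`. -/
def e₁ : ℤ × ℤ := (1, 0)

/-- `e₂ = (0,1)` in `ℤ × ℤ`. -/
def e₂ : ℤ × ℤ := (0, 1)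

/-- A subgroup `L ≤ ℤ × ℤ` is admissible if it has finite index and contains no nonzero
vector `(v₁, v₂)` with `|v₁| ≤ 2` and `|v₂| ≤ 2`. -/
def Admissible (L : AddSubgroup (ℤ × ℤ)) : Prop :=
  Finite ((ℤ × ℤ) ⧸ L) ∧ ∀ v ∈ L, v ≠ 0 → ¬(|v.1| ≤ 2 ∧ |v.2| ≤ 2)

/-- A graph is Hamiltonian if it contains a cycle visiting every vertex (exactly once:
a cycle repeats no vertex other than its basepoint). -/
def SimpleGraph.Hamiltonian {α : Type*} (G : SimpleGraph α) : Prop :=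
  ∃ (a : α) (p : G.Walk a a), p.IsCycle ∧ ∀ v, v ∈ p.support

/-- The edge relation of the elongated-triangular graph over an abelian group `A`,
with translation vectors `E₁, E₂`. -/
def elongatedTriRel {A : Type*} [AddCommGroup A] (E₁ E₂ : A) :
    A × Fin 2 → A × Fin 2 → Prop := fun u v =>
  (∃ x : A, u = (x, 0) ∧ v = (x + E₁, 0)) ∨
  (∃ x : A, u = (x, 1) ∧ v = (x + E₁, 1)) ∨
  (∃ x : A, u = (x, 0) ∧ v = (x, 1)) ∨
  (∃ x : A, u = (x, 1) ∧ v = (x + E₂, 0)) ∨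
  (∃ x : A, u = (x, 1) ∧ v = (x + E₁ + E₂, 0))

/-- The elongated-triangular graph over an abelian group `A`. -/
def elongatedTriGraph {A : Type*} [AddCommGroup A] (E₁ E₂ : A) : SimpleGraph (A × Fin 2) :=
  SimpleGraph.fromRel (elongatedTriRel E₁ E₂)

/-- The elongated-triangular torus graph `G(L)`, the edge graph of the semi-equivelar
map of type `{3³,4²}` on the torus determined by `L`. -/
def elongatedTriTorusGraph (L : AddSubgroup (ℤ × ℤ)) :
    SimpleGraph (((ℤ × ℤ) ⧸ L) × Fin 2) :=
  elongatedTriGraph (QuotientAddGroup.mk e₁) (QuotientAddGroup.mk e₂)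

/-- The infinite elongated-triangular graph `G∞` on `(ℤ × ℤ) × {0,1}`. -/
def elongatedTriInfGraph : SimpleGraph ((ℤ × ℤ) × Fin 2) := elongatedTriGraph e₁ e₂

/-! Place the vertex `(x, y, i)` of `G∞` at height `2y + i`: the horizontal edges at each
height together with the edges `(x, y, 0) – (x, y, 1) – (x, y + 1, 0)` form a copy of the square
grid `ℕ × ℕ`. Let `m` be the order of `e₁` modulo `L` (at least `2`, as `e₁ ∉ L`) and `sℤ` the
projection of `L` to the second coordinate; then `[0, m) × [0, s)` is a fundamental domain of `L`,
so the `m × 2s` grid rectangle above it maps bijectively onto the vertex set of `G(L)`. That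
rectangle has a Hamiltonian cycle (up the column `x = 0`, then snaking down through the rows over
the columns `1, …, m - 1`), and its image in `G∞` projects onto a Hamiltonian cycle of `G(L)`. -/

open SimpleGraph

namespace SimpleGraph.Walk

variable {V W : Type*} {G : SimpleGraph V} {G' : SimpleGraph W}

theorem isCycle_of_nodup_support_tail {u : V} {p : G.Walk u u} (hlen : 3 ≤ p.length)
    (hnd : p.support.tail.Nodup) : p.IsCycle := by
  rw [isCycle_iff_isPath_tail_and_le_length, isPath_def,
    support_tail_of_not_nil p (not_nil_iff_lt_length.2 (by omega))]
  exact ⟨hnd, hlen⟩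

theorem IsCycle.map_of_injOn {u : V} {p : G.Walk u u} (hp : p.IsCycle) (f : G →g G')
    (hf : Set.InjOn f {v | v ∈ p.support}) : (p.map f).IsCycle := by
  refine isCycle_of_nodup_support_tail (by simpa using hp.three_le_length) ?_
  rw [support_map, ← List.map_tail]
  exact hp.support_nodup.map_on fun x hx y hy =>
    hf (List.mem_of_mem_tail hx) (List.mem_of_mem_tail hy)

end SimpleGraph.Walk

theorem SimpleGraph.exists_isCycle_of_isChain {V : Type*} {G : SimpleGraph V} {l : List V}
    (hchain : l.IsChain G.Adj) (hclose : ∀ x ∈ l.getLast?, ∀ y ∈ l.head?, G.Adj x y)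
    (hnd : l.Nodup) (hlen : 3 ≤ l.length) :
    ∃ (u : V) (p : G.Walk u u), p.IsCycle ∧ ∀ v, v ∈ p.support ↔ v ∈ l := by
  obtain _ | ⟨u, t⟩ := l
  · simp at hlen
  have hchain' : (u :: t ++ [u]).IsChain G.Adj :=
    hchain.append (.singleton u) (by simpa using hclose)
  obtain ⟨p, hsupp⟩ : ∃ p : G.Walk u u, p.support = u :: t ++ [u] := by
    refine ⟨(Walk.ofSupport (u :: t ++ [u]) (List.cons_ne_nil _ _) hchain').copy
      (List.head_cons ..) ?_, ?_⟩
    · simp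
    · rw [Walk.support_copy, Walk.support_ofSupport]
  refine ⟨u, p, Walk.isCycle_of_nodup_support_tail ?_ ?_, fun v => ?_⟩
  · have := p.length_support
    simp only [hsupp, List.length_append, List.length_cons] at this hlen
    omega
  · rw [hsupp, List.cons_append, List.tail_cons]
    exact (List.perm_append_singleton u t).nodup_iff.2 hnd
  · simp [hsupp, or_comm]

section ElongatedTri

variable {A B : Type*} [AddCommGroup A] [AddCommGroup B] {E₁ E₂ : A}

theorem elongatedTriRel.ne (hE : E₁ ≠ 0) {u v : A × Fin 2} (h : elongatedTriRel E₁ E₂ u v) :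
    u ≠ v := by
  rcases h with ⟨x, rfl, rfl⟩ | ⟨x, rfl, rfl⟩ | ⟨x, rfl, rfl⟩ | ⟨x, rfl, rfl⟩ | ⟨x, rfl, rfl⟩ <;>
    simp [hE]

theorem elongatedTriRel.map (φ : A →+ B) {u v : A × Fin 2} (h : elongatedTriRel E₁ E₂ u v) :
    elongatedTriRel (φ E₁) (φ E₂) (φ u.1, u.2) (φ v.1, v.2) := by
  rcases h with ⟨x, rfl, rfl⟩ | ⟨x, rfl, rfl⟩ | ⟨x, rfl, rfl⟩ | ⟨x, rfl, rfl⟩ | ⟨x, rfl, rfl⟩ <;>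
    simp [elongatedTriRel]

def elongatedTriGraph.mapHom (φ : A →+ B) (E₂ : A) (hE : φ E₁ ≠ 0) :
    elongatedTriGraph E₁ E₂ →g elongatedTriGraph (φ E₁) (φ E₂) where
  toFun v := (φ v.1, v.2)
  map_rel' := by
    rintro u v ⟨-, h | h⟩
    · exact ⟨(h.map φ).ne hE, .inl (h.map φ)⟩
    · exact ⟨((h.map φ).ne hE).symm, .inr (h.map φ)⟩

end ElongatedTri

abbrev squareGrid : SimpleGraph (ℕ × ℕ) := (hasse ℕ).boxProd (hasse ℕ)

def gridVertex (p : ℕ × ℕ) : (ℤ × ℤ) × Fin 2 := (((p.1 : ℤ), ((p.2 / 2 : ℕ) : ℤ)), Fin.ofNat 2 p.2)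

theorem gridVertex_injective : Function.Injective gridVertex := by
  rintro ⟨x, k⟩ ⟨x', k'⟩ h
  simp only [gridVertex, Prod.mk.injEq, Nat.cast_inj, Fin.ext_iff, Fin.val_ofNat] at h
  ext <;> omega

theorem gridVertex_two_mul (x y : ℕ) : gridVertex (x, 2 * y) = (((x : ℤ), (y : ℤ)), 0) := by
  simp [gridVertex, Fin.ext_iff]

theorem gridVertex_two_mul_add_one (x y : ℕ) :
    gridVertex (x, 2 * y + 1) = (((x : ℤ), (y : ℤ)), 1) := by
  rw [gridVertex, show (2 * y + 1) / 2 = y by omega]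
  simp [Fin.ext_iff]

theorem elongatedTriInfGraph_adj_gridVertex_right (x k : ℕ) :
    elongatedTriInfGraph.Adj (gridVertex (x, k)) (gridVertex (x + 1, k)) := by
  obtain ⟨y, rfl | rfl⟩ := Nat.even_or_odd' k <;>
    simp [gridVertex_two_mul, gridVertex_two_mul_add_one, elongatedTriInfGraph,
      elongatedTriGraph, elongatedTriRel, e₁]

theorem elongatedTriInfGraph_adj_gridVertex_up (x k : ℕ) :
    elongatedTriInfGraph.Adj (gridVertex (x, k)) (gridVertex (x, k + 1)) := by
  obtain ⟨y, rfl | rfl⟩ := Nat.even_or_odd' k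
  · simp [gridVertex_two_mul, gridVertex_two_mul_add_one, elongatedTriInfGraph,
      elongatedTriGraph, elongatedTriRel]
  · rw [show 2 * y + 1 + 1 = 2 * (y + 1) by ring, gridVertex_two_mul, gridVertex_two_mul_add_one]
    simp [elongatedTriInfGraph, elongatedTriGraph, elongatedTriRel, e₂]

def gridHom : squareGrid →g elongatedTriInfGraph where
  toFun := gridVertex
  map_rel' := by
    rintro ⟨x, k⟩ ⟨x', k'⟩ h
    simp only [squareGrid, boxProd_adj, hasse_adj, Nat.covBy_iff_add_one_eq] at h
    rcases h with ⟨rfl | rfl, rfl⟩ | ⟨rfl | rfl, rfl⟩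
    · exact elongatedTriInfGraph_adj_gridVertex_right x k
    · exact (elongatedTriInfGraph_adj_gridVertex_right x' k).symm
    · exact elongatedTriInfGraph_adj_gridVertex_up x k
    · exact (elongatedTriInfGraph_adj_gridVertex_up x k').symm

section GridSnake

variable {m : ℕ}

def gridRow (m k : ℕ) : List (ℕ × ℕ) := (List.range' 1 (m - 1)).map (·, k)

theorem mem_gridRow {k : ℕ} {v : ℕ × ℕ} : v ∈ gridRow m k ↔ 1 ≤ v.1 ∧ v.1 < m ∧ v.2 = k := by
  rw [gridRow, List.mem_map]
  constructor
  · rintro ⟨x, hx, rfl⟩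
    rw [List.mem_range'_1] at hx
    exact ⟨hx.1, by omega, rfl⟩
  · rintro ⟨h1, h2, h3⟩
    exact ⟨v.1, List.mem_range'_1.2 ⟨h1, by omega⟩, by rw [← h3]⟩

theorem nodup_gridRow (m k : ℕ) : (gridRow m k).Nodup :=
  (List.nodup_range' ..).map fun _ _ h => (Prod.mk.inj h).1

theorem isChain_gridRow (m k : ℕ) : (gridRow m k).IsChain squareGrid.Adj :=
  List.isChain_map _ |>.2 <| (List.isChain_range' 1 (m - 1) 1).imp fun x y h => by simp [h]

theorem head?_gridRow (hm : 2 ≤ m) (k : ℕ) : (gridRow m k).head? = some (1, k) := by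
  obtain ⟨n, rfl⟩ : ∃ n, m = n + 2 := ⟨m - 2, by omega⟩
  simp [gridRow, List.range'_succ]

theorem getLast?_gridRow (hm : 2 ≤ m) (k : ℕ) : (gridRow m k).getLast? = some (m - 1, k) := by
  obtain ⟨n, rfl⟩ : ∃ n, m = n + 2 := ⟨m - 2, by omega⟩
  simp [gridRow, List.getLast?_range']

def gridSnakeDown (m : ℕ) : ℕ → List (ℕ × ℕ)
  | 0 => []
  | s + 1 => gridRow m (2 * s + 1) ++ (gridRow m (2 * s)).reverse ++ gridSnakeDown m s

theorem mem_gridSnakeDown {s : ℕ} {v : ℕ × ℕ} :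
    v ∈ gridSnakeDown m s ↔ 1 ≤ v.1 ∧ v.1 < m ∧ v.2 < 2 * s := by
  induction s with
  | zero => simp [gridSnakeDown]
  | succ s ih =>
    simp only [gridSnakeDown, List.mem_append, List.mem_reverse, mem_gridRow, ih]
    omega

theorem nodup_gridSnakeDown (m s : ℕ) : (gridSnakeDown m s).Nodup := by
  induction s with
  | zero => exact List.nodup_nil
  | succ s ih =>
    simp only [gridSnakeDown, List.nodup_append, List.nodup_reverse, List.mem_append,
      List.mem_reverse, mem_gridRow, mem_gridSnakeDown]
    refine ⟨⟨nodup_gridRow .., nodup_gridRow .., ?_⟩, ih, ?_⟩ <;>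
      rintro a ha b hb rfl <;> omega

theorem head?_gridSnakeDown (hm : 2 ≤ m) (s : ℕ) :
    (gridSnakeDown m (s + 1)).head? = some (1, 2 * s + 1) := by
  simp [gridSnakeDown, List.head?_append, head?_gridRow hm]

theorem getLast?_gridSnakeDown (hm : 2 ≤ m) (s : ℕ) :
    (gridSnakeDown m (s + 1)).getLast? = some (1, 0) := by
  induction s with
  | zero => simp [gridSnakeDown, List.getLast?_reverse, head?_gridRow hm]
  | succ s ih => rw [gridSnakeDown, List.getLast?_append, ih]; rfl

theorem isChain_gridSnakeDown (hm : 2 ≤ m) (s : ℕ) :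
    (gridSnakeDown m s).IsChain squareGrid.Adj := by
  induction s with
  | zero => exact List.IsChain.nil
  | succ s ih =>
    refine ((isChain_gridRow m _).append ?_ ?_).append ih ?_
    · exact List.isChain_reverse.2 ((isChain_gridRow m _).imp fun _ _ h => h.symm)
    · simp [List.head?_reverse, getLast?_gridRow hm]
    · cases s with
      | zero => simp [gridSnakeDown]
      | succ s =>
        simp [List.getLast?_append, List.getLast?_reverse, head?_gridRow hm,
          head?_gridSnakeDown hm, mul_add]

theorem exists_isCycle_support_gridRectangle (hm : 2 ≤ m) {s : ℕ} (hs : 0 < s) :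
    ∃ (u : ℕ × ℕ) (p : squareGrid.Walk u u),
      p.IsCycle ∧ ∀ v, v ∈ p.support ↔ v.1 < m ∧ v.2 < 2 * s := by
  obtain ⟨s, rfl⟩ : ∃ n, s = n + 1 := ⟨s - 1, by omega⟩
  set lane := (List.range' 0 (2 * (s + 1))).map ((0, ·))
  have hmem_lane {v : ℕ × ℕ} : v ∈ lane ↔ v.1 = 0 ∧ v.2 < 2 * (s + 1) := by
    obtain ⟨x, y⟩ := v
    simp [lane, List.mem_range'_1, eq_comm, and_comm]
  have hchain : (lane ++ gridSnakeDown m (s + 1)).IsChain squareGrid.Adj := by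
    refine List.IsChain.append ?_ (isChain_gridSnakeDown hm _) ?_
    · exact List.isChain_map _ |>.2 <| (List.isChain_range' 0 _ 1).imp fun x y h => by simp [h]
    · simp [lane, List.getLast?_range', head?_gridSnakeDown hm, mul_add]
  have hclose : ∀ x ∈ (lane ++ gridSnakeDown m (s + 1)).getLast?,
      ∀ y ∈ (lane ++ gridSnakeDown m (s + 1)).head?, squareGrid.Adj x y := by
    simp [lane, List.getLast?_append, getLast?_gridSnakeDown hm, List.head?_range']
  have hnodup : (lane ++ gridSnakeDown m (s + 1)).Nodup := by
    rw [List.nodup_append]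
    refine ⟨(List.nodup_range' ..).map fun _ _ h => (Prod.mk.inj h).2, nodup_gridSnakeDown m _,
      fun a ha b hb => ?_⟩
    rw [hmem_lane] at ha
    rw [mem_gridSnakeDown] at hb
    rintro rfl
    omega
  have hlength : 3 ≤ (lane ++ gridSnakeDown m (s + 1)).length := by
    have : (gridSnakeDown m (s + 1)).length ≠ 0 := fun h => by
      simpa [List.length_eq_zero_iff.1 h] using head?_gridSnakeDown hm s
    simp only [lane, List.length_append, List.length_map, List.length_range']
    omega
  obtain ⟨u, p, hp, hsupp⟩ := exists_isCycle_of_isChain hchain hclose hnodup hlength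
  refine ⟨u, p, hp, fun v => ?_⟩
  rw [hsupp, List.mem_append, hmem_lane, mem_gridSnakeDown]
  omega

end GridSnake

section Quotient

variable {L : AddSubgroup (ℤ × ℤ)}

theorem prod_mk_zero_mem_iff_addOrderOf_dvd (x : ℤ) :
    ((x, 0) : ℤ × ℤ) ∈ L ↔ (addOrderOf (QuotientAddGroup.mk e₁ : (ℤ × ℤ) ⧸ L) : ℤ) ∣ x := by
  rw [addOrderOf_dvd_iff_zsmul_eq_zero, ← QuotientAddGroup.mk_zsmul, QuotientAddGroup.eq_zero_iff]
  simp [e₁]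

theorem exists_snd_generator (L : AddSubgroup (ℤ × ℤ)) [Finite ((ℤ × ℤ) ⧸ L)] :
    ∃ (s : ℕ) (r : ℤ), 0 < s ∧ ((r, (s : ℤ)) : ℤ × ℤ) ∈ L ∧ ∀ v ∈ L, (s : ℤ) ∣ v.2 := by
  obtain ⟨a, ha⟩ := Int.subgroup_cyclic (L.map (AddMonoidHom.snd ℤ ℤ))
  rw [← AddSubgroup.zmultiples_eq_closure] at ha
  have hmem (b : ℤ) : (∃ v ∈ L, v.2 = b) ↔ a ∣ b := by
    rw [← Int.mem_zmultiples_iff, ← ha]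
    rfl
  obtain ⟨⟨r, _⟩, hr, rfl⟩ := (hmem a.natAbs).2 Int.dvd_natAbs_self
  refine ⟨a.natAbs, r, Int.natAbs_pos.2 fun ha0 => ?_, hr, fun v hv => ?_⟩
  · subst ha0
    set n := addOrderOf (QuotientAddGroup.mk e₂ : (ℤ × ℤ) ⧸ L)
    have hn : ((0, (n : ℤ)) : ℤ × ℤ) ∈ L := by
      rw [← QuotientAddGroup.eq_zero_iff, show ((0, (n : ℤ)) : ℤ × ℤ) = n • e₂ by simp [e₂],
        QuotientAddGroup.mk_nsmul, addOrderOf_nsmul_eq_zero]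
    have := (hmem n).1 ⟨_, hn, rfl⟩
    simp only [zero_dvd_iff, Nat.cast_eq_zero] at this
    exact (isOfFinAddOrder_of_finite _).addOrderOf_pos.ne' this
  · exact Int.natAbs_dvd.2 ((hmem v.2).1 ⟨v, hv, rfl⟩)

theorem bijOn_mk_rectangle {m s : ℕ} {r : ℤ} (hm : 0 < m) (hs : 0 < s)
    (hm_mem : ∀ x : ℤ, ((x, 0) : ℤ × ℤ) ∈ L ↔ (m : ℤ) ∣ x) (hrs : ((r, (s : ℤ)) : ℤ × ℤ) ∈ L)
    (hs_dvd : ∀ v ∈ L, (s : ℤ) ∣ v.2) :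
    Set.BijOn (fun p : ℕ × ℕ => (QuotientAddGroup.mk ((p.1 : ℤ), (p.2 : ℤ)) : (ℤ × ℤ) ⧸ L))
      {p | p.1 < m ∧ p.2 < s} Set.univ := by
  have hm' : (0 : ℤ) < m := by exact_mod_cast hm
  have hs' : (0 : ℤ) < s := by exact_mod_cast hs
  refine ⟨Set.mapsTo_univ _ _, ?_, ?_⟩
  · rintro ⟨a, b⟩ ⟨ha, hb⟩ ⟨a', b'⟩ ⟨ha', hb'⟩ h
    rw [QuotientAddGroup.eq] at h
    have hsnd : -(b : ℤ) + b' = 0 :=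
      Int.eq_zero_of_abs_lt_dvd (hs_dvd _ h) (by rw [abs_lt]; omega)
    have hfst : -(a : ℤ) + a' = 0 := by
      refine Int.eq_zero_of_abs_lt_dvd ((hm_mem _).1 ?_) (by rw [abs_lt]; omega)
      convert h using 1
      simp [hsnd]
    simp only [Prod.mk.injEq]
    omega
  · rintro _ -
    obtain ⟨⟨a, b⟩, rfl⟩ := QuotientAddGroup.mk_surjective (s := L) ‹_›
    set a' := a - b / s * r
    have hx := Int.emod_nonneg a' hm'.ne'
    have hy := Int.emod_nonneg b hs'.ne'
    refine ⟨((a' % m).toNat, (b % s).toNat),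
      ⟨by have := Int.emod_lt_of_pos a' hm'; omega, by have := Int.emod_lt_of_pos b hs'; omega⟩, ?_⟩
    have key : -(((a' % m).toNat : ℤ), ((b % s).toNat : ℤ)) + (a, b)
        = (b / s) • (r, (s : ℤ)) + ((m : ℤ) * (a' / m), 0) := by
      rw [Int.toNat_of_nonneg hx, Int.toNat_of_nonneg hy]
      ext <;> simp only [Prod.neg_mk, Prod.mk_add_mk, Prod.smul_mk, Int.zsmul_eq_mul, add_zero] <;>
        linarith [Int.emod_add_mul_ediv a' m, Int.emod_add_mul_ediv b s]
    simp only [QuotientAddGroup.eq, key]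
    exact L.add_mem (L.zsmul_mem hrs _) ((hm_mem _).2 (dvd_mul_right _ _))

end Quotient

theorem Set.BijOn.snd_div_two_mod_two {X : Type*} {g : ℕ × ℕ → X} {m s : ℕ}
    (hg : Set.BijOn g {p | p.1 < m ∧ p.2 < s} Set.univ) :
    Set.BijOn (fun p : ℕ × ℕ => (g (p.1, p.2 / 2), Fin.ofNat 2 p.2))
      {p | p.1 < m ∧ p.2 < 2 * s} Set.univ := by
  refine ⟨Set.mapsTo_univ _ _, ?_, ?_⟩
  · rintro ⟨x, k⟩ ⟨hx, hk⟩ ⟨x', k'⟩ ⟨hx', hk'⟩ h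
    simp only [Prod.mk.injEq, Fin.ext_iff, Fin.val_ofNat] at h
    have := hg.injOn (by simp only [Set.mem_ofPred_eq]; omega)
      (by simp only [Set.mem_ofPred_eq]; omega) h.1
    simp only [Prod.mk.injEq] at this ⊢
    omega
  · rintro ⟨q, i⟩ -
    obtain ⟨⟨x, y⟩, ⟨hx, hy⟩, hxy⟩ := hg.surjOn (Set.mem_univ q)
    refine ⟨(x, 2 * y + i), ⟨hx, by omega⟩, ?_⟩
    simp only [Prod.mk.injEq]
    exact ⟨by convert hxy using 3; omega, Fin.ext (by rw [Fin.val_ofNat]; omega)⟩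

/-- Every elongated-triangular torus graph (type `{3³,4²}`) has a contractible Hamiltonian
cycle: there is a cycle `p` in the infinite elongated-triangular graph `G∞` which the
projection `π` (reduction of the first coordinate modulo `L`) maps isomorphically onto a
Hamiltonian cycle of `G(L)` (it maps onto a cycle through every vertex; a cycle repeats no
vertex, so `π` restricted to `p` is injective, i.e. an isomorphism of cycles). -/
theorem elongatedTriTorusGraph_contractible_hamiltonian
    (L : AddSubgroup (ℤ × ℤ)) (hL : Admissible L) :
    ∃ π : elongatedTriInfGraph →g elongatedTriTorusGraph L,
      (∀ (v : ℤ × ℤ) (i : Fin 2), π (v, i) = (QuotientAddGroup.mk v, i)) ∧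
      ∃ (a : (ℤ × ℤ) × Fin 2) (p : elongatedTriInfGraph.Walk a a),
        p.IsCycle ∧ (p.map π).IsCycle ∧ ∀ v, v ∈ (p.map π).support := by
  obtain ⟨hfin, hsmall⟩ := hL
  have he₁ : (QuotientAddGroup.mk e₁ : (ℤ × ℤ) ⧸ L) ≠ 0 := fun h =>
    hsmall e₁ ((QuotientAddGroup.eq_zero_iff _).1 h) (by decide) (by norm_num [e₁])
  have hm : 2 ≤ addOrderOf (QuotientAddGroup.mk e₁ : (ℤ × ℤ) ⧸ L) := by
    have := (isOfFinAddOrder_of_finite (QuotientAddGroup.mk e₁ : (ℤ × ℤ) ⧸ L)).addOrderOf_pos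
    have := mt AddMonoid.addOrderOf_eq_one_iff.1 he₁
    omega
  obtain ⟨s, r, hs, hrs, hs_dvd⟩ := exists_snd_generator L
  have hbij := (bijOn_mk_rectangle (by omega) hs prod_mk_zero_mem_iff_addOrderOf_dvd hrs
    hs_dvd).snd_div_two_mod_two
  obtain ⟨u, p, hp, hsupp⟩ := exists_isCycle_support_gridRectangle hm hs
  let π : elongatedTriInfGraph →g elongatedTriTorusGraph L :=
    elongatedTriGraph.mapHom (QuotientAddGroup.mk' L) e₂ he₁
  refine ⟨π, fun _ _ => rfl, _, p.map gridHom, hp.map gridVertex_injective, ?_, fun v => ?_⟩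
  · rw [Walk.map_map]
    exact hp.map_of_injOn _ (hbij.injOn.mono fun v hv => (hsupp v).1 hv)
  · obtain ⟨w, hw, rfl⟩ := hbij.surjOn (Set.mem_univ v)
    rw [Walk.support_map, Walk.support_map, List.map_map]
    exact List.mem_map_of_mem ((hsupp w).2 hw)
end

section
/- For every admissible subgroup L of ℤ × ℤ, the snub-hexagonal torus graph G(L) — the edge graph of the semi-equivelar map of type {3⁴,6} on the torus determined by L — is Hamiltonian. -/
/-- The six direction vectors `d : ℤ/6 → ℤ × ℤ`:
`d₀ = (1,0)`, `d₁ = (0,1)`, `d₂ = (−1,1)`, `d₃ = (−1,0)`, `d₄ = (0,−1)`, `d₅ = (1,−1)`. -/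
def d : Fin 6 → ℤ × ℤ := ![(1, 0), (0, 1), (-1, 1), (-1, 0), (0, -1), (1, -1)]

/-- The edge relation of the snub-hexagonal graph over an abelian group `A`, with
direction vectors `D : ℤ/6 → A` (second coordinates are taken mod 6). -/
def snubHexRel {A : Type*} [AddCommGroup A] (D : Fin 6 → A) :
    A × Fin 6 → A × Fin 6 → Prop := fun u v =>
  (∃ (x : A) (t : Fin 6), u = (x, t) ∧ v = (x, t + 1)) ∨
  (∃ (x : A) (t : Fin 6), u = (x, t) ∧ v = (x + D t, t + 4)) ∨
  (∃ (x : A) (t : Fin 6), u = (x, t + 1) ∧ v = (x + D t, t + 4)) ∨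
  (∃ (x : A) (t : Fin 6), u = (x, t + 1) ∧ v = (x + D t, t + 3))

/-- The snub-hexagonal graph over an abelian group `A`. -/
def snubHexGraph {A : Type*} [AddCommGroup A] (D : Fin 6 → A) : SimpleGraph (A × Fin 6) :=
  SimpleGraph.fromRel (snubHexRel D)

/-- The snub-hexagonal torus graph `G(L)`, the edge graph of the semi-equivelar map of
type `{3⁴,6}` on the torus determined by `L`. -/
def snubHexTorusGraph (L : AddSubgroup (ℤ × ℤ)) :
    SimpleGraph (((ℤ × ℤ) ⧸ L) × Fin 6) :=
  snubHexGraph (fun t => QuotientAddGroup.mk (d t))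

/-!
A finite-index subgroup `L ≤ ℤ²` has the box `[0, N) × [0, M)` as a fundamental domain, where
`(N, 0)` generates `L ∩ (ℤ × 0)` and `M ℤ` is the projection of `L` to the second coordinate;
admissibility forces `N ≥ 2`. In the plane graph over `ℤ²`, row `j` of the box is covered by a
there-and-back arc: vertices `4, 5, 0` of the cells `1, …, N - 1` rightwards, then their vertices
`1, 2, 3` leftwards. The arcs of the rows `0, …, M - 1` are chained upwards through vertex `0` of
cell `0`, and the walk comes back down column `0` through the vertices `1, …, 5` of its cells.
Its support is the `6NM` vertices of the box, so it projects to a walk in `G(L)` that passes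
through each of the `6NM` vertices exactly once, and the hexagon edge `(0, 5) – (0, 0)` closes
it into a Hamiltonian cycle.
-/

theorem List.nodup_of_forall_mem_of_length_le_natCard {α : Type*} {l : List α}
    (hmem : ∀ a, a ∈ l) (hlen : l.length ≤ Nat.card α) : l.Nodup := by
  classical
  have : Fintype α := ⟨l.toFinset, by simpa using hmem⟩
  have huniv : l.toFinset = Finset.univ := Finset.eq_univ_of_forall (by simpa using hmem)
  rw [← Multiset.coe_nodup, ← Multiset.toFinset_card_eq_card_iff_nodup, Multiset.coe_card]
  refine le_antisymm l.toFinset_card_le ?_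
  rwa [Nat.card_eq_fintype_card, ← Finset.card_univ, ← huniv] at hlen

namespace SimpleGraph

variable {α : Type*} {G : SimpleGraph α} {u v : α}

theorem Walk.isPath_of_forall_mem_support_of_length_lt (p : G.Walk u v)
    (hmem : ∀ w, w ∈ p.support) (hlen : p.length < Nat.card α) : p.IsPath :=
  IsPath.mk' (List.nodup_of_forall_mem_of_length_le_natCard hmem (by rw [length_support]; omega))

theorem Walk.IsPath.cons_isCycle_of_two_le_length {p : G.Walk v u} (hp : p.IsPath)
    (h : G.Adj u v) (hlen : 2 ≤ p.length) : (cons h p).IsCycle :=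
  (cons_isCycle_iff p h).mpr ⟨hp, fun he => by
    have := hp.length_eq_one_of_mem_edges (Sym2.eq_swap ▸ he)
    omega⟩

theorem hamiltonian_of_walk (p : G.Walk u v) (h : G.Adj v u) (hmem : ∀ w, w ∈ p.support)
    (hlen : p.length < Nat.card α) (hlen₂ : 2 ≤ p.length) : G.Hamiltonian :=
  ⟨v, .cons h p,
    (p.isPath_of_forall_mem_support_of_length_lt hmem hlen).cons_isCycle_of_two_le_length h hlen₂,
    fun w => by simp [hmem]⟩

end SimpleGraph

namespace snubHexGraph

variable {A B : Type*} [AddCommGroup A] [AddCommGroup B] {D : Fin 6 → A}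

theorem snd_ne_of_snubHexRel {u v : A × Fin 6} (h : snubHexRel D u v) : u.2 ≠ v.2 := by
  rcases h with ⟨x, t, rfl, rfl⟩ | ⟨x, t, rfl, rfl⟩ | ⟨x, t, rfl, rfl⟩ | ⟨x, t, rfl, rfl⟩ <;>
    dsimp only <;> revert t <;> decide

theorem adj_of_snubHexRel {u v : A × Fin 6} (h : snubHexRel D u v) : (snubHexGraph D).Adj u v :=
  (SimpleGraph.fromRel_adj _ _ _).mpr
    ⟨fun huv => snd_ne_of_snubHexRel h (congrArg Prod.snd huv), Or.inl h⟩

theorem adj_succ (x : A) (t : Fin 6) : (snubHexGraph D).Adj (x, t) (x, t + 1) :=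
  adj_of_snubHexRel (Or.inl ⟨x, t, rfl, rfl⟩)

theorem snubHexRel_map (f : A →+ B) {u v : A × Fin 6} (h : snubHexRel D u v) :
    snubHexRel (f ∘ D) (Prod.map f id u) (Prod.map f id v) := by
  rcases h with ⟨x, t, rfl, rfl⟩ | ⟨x, t, rfl, rfl⟩ | ⟨x, t, rfl, rfl⟩ | ⟨x, t, rfl, rfl⟩
  · exact Or.inl ⟨f x, t, rfl, rfl⟩
  · exact Or.inr (Or.inl ⟨f x, t, rfl, by simp⟩)
  · exact Or.inr (Or.inr (Or.inl ⟨f x, t, rfl, by simp⟩))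
  · exact Or.inr (Or.inr (Or.inr ⟨f x, t, rfl, by simp⟩))

variable (D) in
def mapHom (f : A →+ B) : snubHexGraph D →g snubHexGraph (f ∘ D) where
  toFun := Prod.map f id
  map_rel' h := by
    rcases ((SimpleGraph.fromRel_adj _ _ _).mp h).2 with huv | hvu
    · exact adj_of_snubHexRel (snubHexRel_map f huv)
    · exact (adj_of_snubHexRel (snubHexRel_map f hvu)).symm

end snubHexGraph

def snubHexTorusGraph.projection (L : AddSubgroup (ℤ × ℤ)) :
    snubHexGraph d →g snubHexTorusGraph L :=
  snubHexGraph.mapHom d (QuotientAddGroup.mk' L)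

namespace snubHexPlane

open snubHexGraph SimpleGraph.Walk

theorem adj_right (i j : ℤ) : (snubHexGraph d).Adj ((i, j), 0) ((i + 1, j), 4) :=
  adj_of_snubHexRel (Or.inr (Or.inl ⟨(i, j), 0, rfl, by simp [d]⟩))

theorem adj_left (i j : ℤ) : (snubHexGraph d).Adj ((i + 1, j), 3) ((i, j), 1) :=
  (adj_of_snubHexRel (Or.inr (Or.inr (Or.inr ⟨(i, j), 0, rfl, by simp [d]⟩)))).symm

theorem adj_up (i j : ℤ) : (snubHexGraph d).Adj ((i + 1, j), 3) ((i, j + 1), 0) :=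
  adj_of_snubHexRel (Or.inr (Or.inr (Or.inl ⟨(i + 1, j), 2, rfl, by simp [d]⟩)))

theorem adj_down (i j : ℤ) : (snubHexGraph d).Adj ((i, j + 1), 5) ((i, j), 1) :=
  (adj_of_snubHexRel (Or.inr (Or.inl ⟨(i, j), 1, rfl, by simp [d]⟩))).symm

def rowArc (j : ℤ) : (n : ℕ) → (x : ℤ) → (snubHexGraph d).Walk ((x, j), 4) ((x, j), 3)
  | 0, _ => cons (adj_succ _ 4) <| cons (adj_succ _ 5) <| cons (adj_succ _ 0) <|
      cons (adj_succ _ 1) <| cons (adj_succ _ 2) nil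
  | n + 1, x => cons (adj_succ _ 4) <| cons (adj_succ _ 5) <| cons (adj_right x j) <|
      (rowArc j n (x + 1)).append <| cons (adj_left x j) <| cons (adj_succ _ 1) <|
      cons (adj_succ _ 2) nil

def columnArc (j : ℤ) : (snubHexGraph d).Walk (((0 : ℤ), j), 1) ((0, j), 5) :=
  cons (adj_succ _ 1) <| cons (adj_succ _ 2) <| cons (adj_succ _ 3) <| cons (adj_succ _ 4) nil

def boxArc (n : ℕ) : (m : ℕ) → (j : ℤ) → (snubHexGraph d).Walk (((0 : ℤ), j), 0) ((0, j), 5)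
  | 0, j => cons (adj_right 0 j) <| (rowArc j n 1).append <| cons (adj_left 0 j) (columnArc j)
  | m + 1, j => cons (adj_right 0 j) <| (rowArc j n 1).append <| cons (adj_up 0 j) <|
      (boxArc n m (j + 1)).append <| cons (adj_down 0 j) (columnArc j)

theorem length_rowArc (j : ℤ) : ∀ (n : ℕ) (x : ℤ), (rowArc j n x).length = 6 * n + 5
  | 0, _ => rfl
  | n + 1, _ => by
      simp only [rowArc, length_cons, length_append, length_nil, length_rowArc j n]
      omega

theorem length_boxArc (n : ℕ) :
    ∀ (m : ℕ) (j : ℤ), (boxArc n m j).length + 1 = 6 * (n + 2) * (m + 1)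
  | 0, j => by
      simp only [boxArc, columnArc, length_cons, length_append, length_nil, length_rowArc]
      ring
  | m + 1, j => by
      have := length_boxArc n m (j + 1)
      simp only [boxArc, columnArc, length_cons, length_append, length_nil, length_rowArc]
      linarith

theorem mem_support_rowArc (j : ℤ) (t : Fin 6) :
    ∀ (n : ℕ) (x i : ℤ), x ≤ i → i ≤ x + n → ((i, j), t) ∈ (rowArc j n x).support
  | 0, x, i, h₁, h₂ => by
      obtain rfl : i = x := by omega
      fin_cases t <;> simp [rowArc]
  | n + 1, x, i, h₁, h₂ => by
      rcases h₁.eq_or_lt with rfl | h₁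
      · fin_cases t <;> simp [rowArc]
      · have := mem_support_rowArc j t n (x + 1) i (by omega) (by push_cast at h₂; omega)
        simp [rowArc, mem_support_append_iff, this]

theorem mem_support_boxArc (n : ℕ) (t : Fin 6) :
    ∀ (m : ℕ) (j i k : ℤ), 0 ≤ i → i ≤ n + 1 → j ≤ k → k ≤ j + m →
      ((i, k), t) ∈ (boxArc n m j).support
  | 0, j, i, k, h₁, h₂, h₃, h₄ => by
      obtain rfl : k = j := by omega
      rcases h₁.eq_or_lt with rfl | h₁
      · fin_cases t <;> simp [boxArc, columnArc]
      · simp [boxArc, mem_support_append_iff, mem_support_rowArc _ t n 1 i (by omega) (by omega)]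
  | m + 1, j, i, k, h₁, h₂, h₃, h₄ => by
      rcases h₃.eq_or_lt with rfl | h₃
      · rcases h₁.eq_or_lt with rfl | h₁
        · fin_cases t <;> simp [boxArc, columnArc]
        · simp [boxArc, mem_support_append_iff, mem_support_rowArc _ t n 1 i (by omega) (by omega)]
      · have := mem_support_boxArc n t m (j + 1) i k h₁ h₂ (by omega) (by push_cast at h₄; omega)
        simp [boxArc, mem_support_append_iff, this]

end snubHexPlane

theorem AddSubgroup.zsmul_mem_iff_addOrderOf_dvd {G : Type*} [AddCommGroup G]
    {L : AddSubgroup G} (v : G) (a : ℤ) : a • v ∈ L ↔ (addOrderOf (v : G ⧸ L) : ℤ) ∣ a := by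
  rw [addOrderOf_dvd_iff_zsmul_eq_zero, ← QuotientAddGroup.mk_zsmul, QuotientAddGroup.eq_zero_iff]

section FundamentalBox

variable {L : AddSubgroup (ℤ × ℤ)}

variable (L) in
def boxMk (N M : ℕ) (p : Fin N × Fin M) : (ℤ × ℤ) ⧸ L :=
  QuotientAddGroup.mk ((p.1 : ℤ), (p.2 : ℤ))

theorem boxMk_injective {N M : ℕ} (hN : ∀ a : ℤ, (a, 0) ∈ L → (N : ℤ) ∣ a)
    (hM : ∀ v ∈ L, (M : ℤ) ∣ v.2) : Function.Injective (boxMk L N M) := by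
  rintro ⟨i, j⟩ ⟨i', j'⟩ h
  have hmem : ((i' : ℤ) - i, (j' : ℤ) - j) ∈ L := by
    simpa [boxMk, QuotientAddGroup.eq, neg_add_eq_sub] using h
  have hj : (j' : ℤ) - j = 0 :=
    Int.eq_zero_of_abs_lt_dvd (hM _ hmem) (abs_sub_lt_iff.mpr ⟨by omega, by omega⟩)
  rw [hj] at hmem
  have hi : (i' : ℤ) - i = 0 :=
    Int.eq_zero_of_abs_lt_dvd (hN _ hmem) (abs_sub_lt_iff.mpr ⟨by omega, by omega⟩)
  ext <;> simp only [Fin.val_inj] <;> omega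

theorem boxMk_surjective {N M : ℕ} {k : ℤ} (hN : 0 < N) (hM : 0 < M)
    (hNL : ((N : ℤ), (0 : ℤ)) ∈ L) (hkL : (k, (M : ℤ)) ∈ L) :
    Function.Surjective (boxMk L N M) := by
  intro q
  obtain ⟨⟨a, b⟩, rfl⟩ := QuotientAddGroup.mk_surjective q
  set r := a - b / M * k
  have hr₀ := Int.emod_nonneg r (by omega : (N : ℤ) ≠ 0)
  have hr₁ := Int.emod_lt_of_pos r (by omega : (0 : ℤ) < N)
  have hb₀ := Int.emod_nonneg b (by omega : (M : ℤ) ≠ 0)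
  have hb₁ := Int.emod_lt_of_pos b (by omega : (0 : ℤ) < M)
  refine ⟨(⟨(r % N).toNat, by omega⟩, ⟨(b % M).toNat, by omega⟩), ?_⟩
  simp only [boxMk, Int.toNat_of_nonneg hr₀, Int.toNat_of_nonneg hb₀, QuotientAddGroup.eq]
  have hdiff : -(r % N, b % M) + (a, b) = (b / M) • (k, (M : ℤ)) + (r / N) • ((N : ℤ), (0 : ℤ)) := by
    have := Int.emod_def r N
    have := Int.emod_def b M
    ext <;> simp only [Prod.neg_mk, Prod.mk_add_mk, Prod.smul_mk, Int.zsmul_eq_mul, mul_zero,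
      add_zero] <;> linarith
  rw [hdiff]
  exact add_mem (zsmul_mem hkL _) (zsmul_mem hNL _)

variable (L) in
theorem exists_bijective_boxMk [Finite ((ℤ × ℤ) ⧸ L)] :
    ∃ N M : ℕ, 0 < N ∧ 0 < M ∧ ((N : ℤ), (0 : ℤ)) ∈ L ∧ Function.Bijective (boxMk L N M) := by
  obtain ⟨N, hN⟩ : ∃ N, addOrderOf (e₁ : (ℤ × ℤ) ⧸ L) = N := ⟨_, rfl⟩
  have hN_iff (a : ℤ) : (a, (0 : ℤ)) ∈ L ↔ (N : ℤ) ∣ a := by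
    rw [← hN, ← AddSubgroup.zsmul_mem_iff_addOrderOf_dvd]
    simp [e₁]
  obtain ⟨g, hg⟩ := Int.subgroup_cyclic (L.map (AddMonoidHom.snd ℤ ℤ))
  set M := g.natAbs
  have hM_iff (b : ℤ) : (∃ a, (a, b) ∈ L) ↔ (M : ℤ) ∣ b := by
    rw [← Int.mem_zmultiples_iff, Int.zmultiples_natAbs, AddSubgroup.zmultiples_eq_closure, ← hg]
    simp
  have hM : 0 < M := by
    have hpos := (isOfFinAddOrder_of_finite (e₂ : (ℤ × ℤ) ⧸ L)).addOrderOf_pos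
    have hdvd := (hM_iff (addOrderOf (e₂ : (ℤ × ℤ) ⧸ L))).mp
      ⟨0, by simpa [e₂] using (AddSubgroup.zsmul_mem_iff_addOrderOf_dvd (L := L) e₂ _).mpr dvd_rfl⟩
    exact Nat.pos_of_dvd_of_pos (Int.natCast_dvd_natCast.mp hdvd) hpos
  have hNpos : 0 < N := hN ▸ (isOfFinAddOrder_of_finite _).addOrderOf_pos
  have hNL : ((N : ℤ), (0 : ℤ)) ∈ L := (hN_iff N).mpr dvd_rfl
  obtain ⟨k, hkL⟩ := (hM_iff M).mpr dvd_rfl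
  exact ⟨N, M, hNpos, hM, hNL,
    boxMk_injective (fun a => (hN_iff a).mp) (fun v hv => (hM_iff v.2).mp ⟨v.1, hv⟩),
    boxMk_surjective hNpos hM hNL hkL⟩

end FundamentalBox

open snubHexPlane SimpleGraph.Walk

/-- Every snub-hexagonal torus graph (type `{3⁴,6}`) is Hamiltonian. -/
theorem snubHexTorusGraph_hamiltonian (L : AddSubgroup (ℤ × ℤ)) (hL : Admissible L) :
    (snubHexTorusGraph L).Hamiltonian := by
  have := hL.1
  obtain ⟨N, M, hN, hM, hNL, hbij⟩ := exists_bijective_boxMk L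
  have hN₁ : N ≠ 1 := by
    rintro rfl
    exact hL.2 _ hNL (by decide) (by norm_num)
  obtain ⟨n, rfl⟩ : ∃ n, N = n + 2 := ⟨N - 2, by omega⟩
  obtain ⟨m, rfl⟩ : ∃ m, M = m + 1 := ⟨M - 1, by omega⟩
  let π := snubHexTorusGraph.projection L
  have hcard : Nat.card (((ℤ × ℤ) ⧸ L) × Fin 6) = 6 * (n + 2) * (m + 1) := by
    rw [Nat.card_prod, ← Nat.card_eq_of_bijective _ hbij]
    simp only [Nat.card_eq_fintype_card, Fintype.card_prod, Fintype.card_fin]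
    ring
  have hmem : ∀ w, w ∈ ((boxArc n m 0).map π).support := by
    rintro ⟨q, t⟩
    obtain ⟨⟨i, j⟩, rfl⟩ := hbij.2 q
    rw [support_map]
    exact List.mem_map_of_mem
      (mem_support_boxArc n t m 0 i j (by omega) (by omega) (by omega) (by omega))
  have hclose : (snubHexTorusGraph L).Adj (π ((0, 0), 5)) (π ((0, 0), 0)) :=
    snubHexGraph.adj_succ _ 5
  have hlen := length_boxArc n m 0
  exact SimpleGraph.hamiltonian_of_walk _ hclose hmem (by rw [length_map]; omega)
    (by rw [length_map]; nlinarith)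
end

section
/- For every admissible subgroup L of ℤ × ℤ, the truncated-square torus graph G(L) — the edge graph of the semi-equivelar map of type {4,8,8} on the torus determined by L — is 3-connected. -/
/-- A finite simple graph is `k`-connected if it has more than `k` vertices and for every
set `S` of fewer than `k` vertices, the subgraph induced on the complement of `S` is
connected. -/
def SimpleGraph.KConnected {α : Type*} (k : ℕ) (G : SimpleGraph α) : Prop :=
  k < Nat.card α ∧ ∀ S : Finset α, S.card < k → (G.induce (↑S : Set α)ᶜ).Connected

/-- The edge relation of the truncated-square graph over an abelian group `A`
(second coordinates are taken mod 4). -/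
def truncSquareRel {A : Type*} [AddCommGroup A] (E₁ E₂ : A) :
    A × Fin 4 → A × Fin 4 → Prop := fun u v =>
  (∃ (x : A) (i : Fin 4), u = (x, i) ∧ v = (x, i + 1)) ∨
  (∃ x : A, u = (x, 0) ∧ v = (x + E₁, 2)) ∨
  (∃ x : A, u = (x, 1) ∧ v = (x + E₂, 3))

/-- The truncated-square graph over an abelian group `A`. -/
def truncSquareGraph {A : Type*} [AddCommGroup A] (E₁ E₂ : A) : SimpleGraph (A × Fin 4) :=
  SimpleGraph.fromRel (truncSquareRel E₁ E₂)

/-- The truncated-square torus graph `G(L)`, the edge graph of the semi-equivelar map of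
type `{4,8,8}` on the torus determined by `L`. -/
def truncSquareTorusGraph (L : AddSubgroup (ℤ × ℤ)) :
    SimpleGraph (((ℤ × ℤ) ⧸ L) × Fin 4) :=
  truncSquareGraph (QuotientAddGroup.mk e₁) (QuotientAddGroup.mk e₂)

/-!
Every vertex `(x, i)` of `G(L)` lies on the square `x ∈ ℤ² / L`, and adjacent squares of the
Cayley graph of `ℤ² / L` with generators `e₁, e₂` (a grid on the torus) are joined by edges of
`G(L)`. A set `S` of at most two vertices meets at most two squares. The grid minus two vertices is
still connected: walk greedily towards the target and, when the forward steps are blocked, go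
around the blockers; since `L` has no short vectors, the squares of such a detour are distinct from
the blockers. The intact squares are 4-cycles, hence all lie in one component of `G(L) - S`, and
every vertex outside `S` reaches an intact square, leaving its own square either directly or from a
neighbouring vertex on the same square.
-/

open SimpleGraph

theorem Finset.eq_or_eq_of_card_le_two {α : Type*} {s : Finset α} (hs : s.card ≤ 2) {a b c : α}
    (ha : a ∈ s) (hb : b ∈ s) (hab : a ≠ b) (hc : c ∈ s) : c = a ∨ c = b := by
  by_contra! h
  exact (Finset.two_lt_card.2 ⟨a, ha, b, hb, c, hc, hab, h.1.symm, h.2.symm⟩).not_ge hs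

theorem SimpleGraph.Adj.reachable_induce {V : Type*} {G : SimpleGraph V} {s : Set V} {u v : V}
    (h : G.Adj u v) (hu : u ∈ s) (hv : v ∈ s) : (G.induce s).Reachable ⟨u, hu⟩ ⟨v, hv⟩ :=
  Adj.reachable h

theorem SimpleGraph.Reachable.map_of_adj {V W : Type*} {G : SimpleGraph V} {G' : SimpleGraph W}
    (f : V → W) (hf : ∀ ⦃u v⦄, G.Adj u v → G'.Reachable (f u) (f v)) {u v : V}
    (h : G.Reachable u v) : G'.Reachable (f u) (f v) := by
  obtain ⟨p⟩ := h
  induction p with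
  | nil => rfl
  | cons hadj _ ih => exact (hf hadj).trans ih

theorem notMem_of_notMem_image_fst {α β : Type*} [DecidableEq α] {S : Finset (α × β)} {x : α}
    (hx : x ∉ S.image Prod.fst) (y : β) : (x, y) ∉ S :=
  fun h => hx (Finset.mem_image_of_mem Prod.fst h)

theorem Int.exists_natAbs_eq_one_natAbs_sub_add_lt {a b : ℤ} (h : a ≠ b) :
    ∃ s : ℤ, s.natAbs = 1 ∧ (b - (a + s)).natAbs < (b - a).natAbs := by
  rcases lt_or_gt_of_ne h with h | h
  exacts [⟨1, by omega⟩, ⟨-1, by omega⟩]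

section Grid

variable {A : Type*} [AddCommGroup A] {φ : ℤ × ℤ →+ A}

/-- For `φ = QuotientAddGroup.mk' L` this says that `L` has no nonzero vector of sup-norm at
most `2`. -/
def InjectiveOnBlocks (φ : ℤ × ℤ →+ A) : Prop :=
  ∀ p q : ℤ × ℤ, (p.1 - q.1).natAbs ≤ 2 → (p.2 - q.2).natAbs ≤ 2 → φ p = φ q → p = q

theorem InjectiveOnBlocks.ne (hφ : InjectiveOnBlocks φ) {p q : ℤ × ℤ}
    (h₁ : (p.1 - q.1).natAbs ≤ 2) (h₂ : (p.2 - q.2).natAbs ≤ 2) (hpq : p.1 ≠ q.1 ∨ p.2 ≠ q.2) :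
    φ p ≠ φ q := fun h => by
  obtain rfl := hφ p q h₁ h₂ h
  simp at hpq

theorem InjectiveOnBlocks.notMem_of_mem_of_mem (hφ : InjectiveOnBlocks φ) {D : Finset A}
    (hD : D.card ≤ 2) {p q r : ℤ × ℤ} (hp : φ p ∈ D) (hq : φ q ∈ D)
    (h : (p.1 ≠ q.1 ∨ p.2 ≠ q.2) ∧ (r.1 ≠ p.1 ∨ r.2 ≠ p.2) ∧ (r.1 ≠ q.1 ∨ r.2 ≠ q.2) ∧
      (p.1 - q.1).natAbs ≤ 2 ∧ (p.2 - q.2).natAbs ≤ 2 ∧ (r.1 - p.1).natAbs ≤ 2 ∧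
      (r.2 - p.2).natAbs ≤ 2 ∧ (r.1 - q.1).natAbs ≤ 2 ∧ (r.2 - q.2).natAbs ≤ 2) :
    φ r ∉ D := fun hr => by
  obtain ⟨hpq, hrp, hrq, h₁, h₂, h₃, h₄, h₅, h₆⟩ := h
  rcases D.eq_or_eq_of_card_le_two hD hp hq (hφ.ne h₁ h₂ hpq) hr with h | h
  exacts [hφ.ne h₃ h₄ hrp h, hφ.ne h₅ h₆ hrq h]

theorem InjectiveOnBlocks.comp_prodComm (hφ : InjectiveOnBlocks φ) :
    InjectiveOnBlocks (φ.comp (AddEquiv.prodComm : ℤ × ℤ ≃+ ℤ × ℤ).toAddMonoidHom) :=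
  fun p q h₁ h₂ h => congrArg Prod.swap (hφ p.swap q.swap h₂ h₁ h)

theorem addCayley_comp_prodComm (φ : ℤ × ℤ →+ A) :
    addCayley {(φ.comp (AddEquiv.prodComm : ℤ × ℤ ≃+ ℤ × ℤ).toAddMonoidHom) e₁,
      (φ.comp (AddEquiv.prodComm : ℤ × ℤ ≃+ ℤ × ℤ).toAddMonoidHom) e₂} =
      addCayley {φ e₁, φ e₂} := by
  rw [Set.pair_comm]; rfl

theorem InjectiveOnBlocks.addCayley_adj (hφ : InjectiveOnBlocks φ) {p q : ℤ × ℤ}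
    (h : (q.1 - p.1).natAbs + (q.2 - p.2).natAbs = 1) :
    (addCayley {φ e₁, φ e₂}).Adj (φ p) (φ q) := by
  refine (SimpleGraph.addCayley_adj _ _ _).2 ⟨hφ.ne (by omega) (by omega) (by omega), ?_⟩
  rw [← map_neg, ← map_add, ← map_neg, ← map_add, neg_add_eq_sub, neg_add_eq_sub]
  rcases (by omega : q.1 - p.1 = 1 ∧ q.2 - p.2 = 0 ∨ q.1 - p.1 = 0 ∧ q.2 - p.2 = 1 ∨
      p.1 - q.1 = 1 ∧ p.2 - q.2 = 0 ∨ p.1 - q.1 = 0 ∧ p.2 - q.2 = 1) with h | h | h | h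
  · exact Or.inl (Or.inl (congrArg φ (Prod.ext h.1 h.2)))
  · exact Or.inl (Or.inr (congrArg φ (Prod.ext h.1 h.2)))
  · exact Or.inr (Or.inl (congrArg φ (Prod.ext h.1 h.2)))
  · exact Or.inr (Or.inr (congrArg φ (Prod.ext h.1 h.2)))

/-- Decreases along every detour in the proof of `ReachBelow.succ`; the extra `1` for a zero
coordinate pays for the sidestep around a blocked square, which does not shorten `w - u`. -/
def gridWeight (u w : ℤ × ℤ) : ℕ := max (2 * (w.1 - u.1).natAbs) 1 + max (2 * (w.2 - u.2).natAbs) 1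

def ReachBelow (φ : ℤ × ℤ →+ A) (D : Finset A) (n : ℕ) : Prop :=
  ∀ u w : ℤ × ℤ, gridWeight u w < n → ∀ (hu : φ u ∉ D) (hw : φ w ∉ D),
    ((addCayley {φ e₁, φ e₂}).induce (↑D)ᶜ).Reachable ⟨φ u, hu⟩ ⟨φ w, hw⟩

variable {D : Finset A} {n : ℕ}

theorem ReachBelow.reachable_of_adj (ih : ReachBelow φ D n) (hφ : InjectiveOnBlocks φ)
    {p q w : ℤ × ℤ} (hpq : (q.1 - p.1).natAbs + (q.2 - p.2).natAbs = 1)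
    (hlt : gridWeight q w < n) (hp : φ p ∉ D) (hq : φ q ∉ D) (hw : φ w ∉ D) :
    ((addCayley {φ e₁, φ e₂}).induce (↑D)ᶜ).Reachable ⟨φ p, hp⟩ ⟨φ w, hw⟩ :=
  ((hφ.addCayley_adj hpq).reachable_induce hp hq).trans (ih q w hlt hq hw)

theorem ReachBelow.comp_prodComm (h : ReachBelow φ D n) :
    ReachBelow (φ.comp (AddEquiv.prodComm : ℤ × ℤ ≃+ ℤ × ℤ).toAddMonoidHom) D n := by
  intro u w hlt hu hw
  rw [addCayley_comp_prodComm]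
  refine h u.swap w.swap ?_ hu hw
  simp only [gridWeight, Prod.fst_swap, Prod.snd_swap] at hlt ⊢
  omega

theorem ReachBelow.reachable_of_snd_eq (ih : ReachBelow φ D n) (hφ : InjectiveOnBlocks φ)
    (hD : D.card ≤ 2) {u w : ℤ × ℤ} (hn : gridWeight u w ≤ n) (h₁ : u.1 ≠ w.1)
    (h₂ : u.2 = w.2) (hu : φ u ∉ D) (hw : φ w ∉ D) :
    ((addCayley {φ e₁, φ e₂}).induce (↑D)ᶜ).Reachable ⟨φ u, hu⟩ ⟨φ w, hw⟩ := by
  simp only [gridWeight] at hn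
  obtain ⟨s, hs, hsw⟩ := Int.exists_natAbs_eq_one_natAbs_sub_add_lt h₁
  by_cases hb : φ (u.1 + s, u.2) ∈ D
  · have hfar : 2 ≤ (w.1 - u.1).natAbs := by
      by_contra
      exact hw (by convert hb using 2; ext <;> simp <;> omega)
    -- Besides the blocker, `D` has at most one square, so one of the two neighbouring rows is free.
    obtain ⟨t, ht, ht₀, ht₁⟩ :
        ∃ t : ℤ, t.natAbs = 1 ∧ φ (u.1, u.2 + t) ∉ D ∧ φ (u.1 + s, u.2 + t) ∉ D := by
      by_cases hc : φ (u.1, u.2 + 1) ∈ D ∨ φ (u.1 + s, u.2 + 1) ∈ D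
      · refine ⟨-1, rfl, ?_⟩
        rcases hc with hc | hc
        · exact ⟨hφ.notMem_of_mem_of_mem hD hb hc (by omega),
            hφ.notMem_of_mem_of_mem hD hb hc (by omega)⟩
        · exact ⟨hφ.notMem_of_mem_of_mem hD hb hc (by omega),
            hφ.notMem_of_mem_of_mem hD hb hc (by omega)⟩
      · exact ⟨1, rfl, not_or.1 hc⟩
    exact ((hφ.addCayley_adj (by omega)).reachable_induce hu ht₀).trans
      (ih.reachable_of_adj hφ (by omega) (by simp only [gridWeight]; omega) ht₀ ht₁ hw)
  · exact ih.reachable_of_adj hφ (by omega) (by simp only [gridWeight]; omega) hu hb hw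

theorem ReachBelow.reachable_of_blocked (ih : ReachBelow φ D n) (hφ : InjectiveOnBlocks φ)
    (hD : D.card ≤ 2) {u w : ℤ × ℤ} (hn : gridWeight u w ≤ n) {s t : ℤ} (hs : s.natAbs = 1)
    (ht : t.natAbs = 1) (hsw : (w.1 - (u.1 + s)).natAbs < (w.1 - u.1).natAbs)
    (htw : (w.2 - (u.2 + t)).natAbs < (w.2 - u.2).natAbs)
    (hb₁ : φ (u.1 + s, u.2) ∈ D) (hb₂ : φ (u.1, u.2 + t) ∈ D) (hu : φ u ∉ D) (hw : φ w ∉ D) :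
    ((addCayley {φ e₁, φ e₂}).induce (↑D)ᶜ).Reachable ⟨φ u, hu⟩ ⟨φ w, hw⟩ := by
  simp only [gridWeight] at hn
  have h₁ : φ (u.1, u.2 - t) ∉ D := hφ.notMem_of_mem_of_mem hD hb₁ hb₂ (by omega)
  have h₂ : φ (u.1 + s, u.2 - t) ∉ D := hφ.notMem_of_mem_of_mem hD hb₁ hb₂ (by omega)
  have h₃ : φ (u.1 + 2 * s, u.2 - t) ∉ D := hφ.notMem_of_mem_of_mem hD hb₁ hb₂ (by omega)
  have h₄ : φ (u.1 + 2 * s, u.2) ∉ D := hφ.notMem_of_mem_of_mem hD hb₁ hb₂ (by omega)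
  have h₅ : φ (u.1 + 2 * s, u.2 + t) ∉ D := hφ.notMem_of_mem_of_mem hD hb₁ hb₂ (by omega)
  have h₆ : φ (u.1 + s, u.2 + t) ∉ D := hφ.notMem_of_mem_of_mem hD hb₁ hb₂ (by omega)
  have step {p q : ℤ × ℤ} (h : (q.1 - p.1).natAbs + (q.2 - p.2).natAbs = 1) (hp : φ p ∉ D)
      (hq : φ q ∉ D) : ((addCayley {φ e₁, φ e₂}).induce (↑D)ᶜ).Reachable ⟨φ p, hp⟩ ⟨φ q, hq⟩ :=
    (hφ.addCayley_adj h).reachable_induce hp hq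
  exact ((((step (by omega) hu h₁).trans (step (by omega) h₁ h₂)).trans
    (step (by omega) h₂ h₃)).trans (step (by omega) h₃ h₄)).trans
    ((step (by omega) h₄ h₅).trans
      (ih.reachable_of_adj hφ (by omega) (by simp only [gridWeight]; omega) h₅ h₆ hw))

theorem ReachBelow.succ (ih : ReachBelow φ D n) (hφ : InjectiveOnBlocks φ) (hD : D.card ≤ 2) :
    ReachBelow φ D (n + 1) := by
  intro u w hlt hu hw
  have hn : gridWeight u w ≤ n := Nat.lt_succ_iff.1 hlt
  by_cases h₁ : u.1 = w.1 <;> by_cases h₂ : u.2 = w.2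
  · obtain rfl : u = w := Prod.ext h₁ h₂
    rfl
  · have h := ih.comp_prodComm.reachable_of_snd_eq hφ.comp_prodComm hD (u := u.swap)
      (w := w.swap) (by simp only [gridWeight, Prod.fst_swap, Prod.snd_swap] at hn ⊢; omega)
      h₂ h₁ hu hw
    rwa [addCayley_comp_prodComm] at h
  · exact ih.reachable_of_snd_eq hφ hD hn h₁ h₂ hu hw
  · obtain ⟨s, hs, hsw⟩ := Int.exists_natAbs_eq_one_natAbs_sub_add_lt h₁
    obtain ⟨t, ht, htw⟩ := Int.exists_natAbs_eq_one_natAbs_sub_add_lt h₂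
    simp only [gridWeight] at hn
    by_cases hb₁ : φ (u.1 + s, u.2) ∈ D
    · by_cases hb₂ : φ (u.1, u.2 + t) ∈ D
      · exact ih.reachable_of_blocked hφ hD hn hs ht hsw htw hb₁ hb₂ hu hw
      · exact ih.reachable_of_adj hφ (by omega) (by simp only [gridWeight]; omega) hu hb₂ hw
    · exact ih.reachable_of_adj hφ (by omega) (by simp only [gridWeight]; omega) hu hb₁ hw

theorem reachBelow (hφ : InjectiveOnBlocks φ) (hD : D.card ≤ 2) (n : ℕ) : ReachBelow φ D n := by
  induction n with
  | zero => exact fun u w h => absurd h (Nat.not_lt_zero _)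
  | succ n ih => exact ih.succ hφ hD

theorem addCayley_induce_compl_connected (hφ : InjectiveOnBlocks φ)
    (hsurj : Function.Surjective φ) (hD : D.card ≤ 2) :
    ((addCayley {φ e₁, φ e₂}).induce (↑D)ᶜ).Connected := by
  obtain ⟨x, hx⟩ : ∃ x, x ∉ D := by
    by_contra! h
    exact hφ.notMem_of_mem_of_mem hD (h (φ (0, 0))) (h (φ (1, 0))) (r := (0, 1)) (by omega)
      (h _)
  refine (connected_iff _).2 ⟨?_, ⟨⟨x, hx⟩⟩⟩
  rintro ⟨y, hy⟩ ⟨z, hz⟩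
  obtain ⟨u, rfl⟩ := hsurj y
  obtain ⟨w, rfl⟩ := hsurj z
  exact reachBelow hφ hD _ u w (Nat.lt_succ_self _) hy hz

end Grid

section TruncSquare

variable {A : Type*} [AddCommGroup A]

theorem truncSquareGraph_adj_succ {E₁ E₂ : A} (x : A) {i j : Fin 4} (h : j = i + 1) :
    (truncSquareGraph E₁ E₂).Adj (x, i) (x, j) := by
  subst h
  refine (fromRel_adj _ _ _).2 ⟨?_, Or.inl (Or.inl ⟨x, i, rfl, rfl⟩)⟩
  have : ∀ j : Fin 4, j ≠ j + 1 := by decide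
  simp [this i]

def exitVec : Fin 4 → ℤ × ℤ := ![(1, 0), (0, 1), (-1, 0), (0, -1)]

theorem truncSquareGraph_adj_exit (φ : ℤ × ℤ →+ A) (x : A) (i : Fin 4) :
    (truncSquareGraph (φ e₁) (φ e₂)).Adj (x, i) (x + φ (exitVec i), i + 2) := by
  refine (fromRel_adj _ _ _).2 ⟨by fin_cases i <;> simp, ?_⟩
  fin_cases i
  · exact Or.inl (Or.inr (Or.inl ⟨x, rfl, rfl⟩))
  · exact Or.inl (Or.inr (Or.inr ⟨x, rfl, rfl⟩))
  · refine Or.inr (Or.inr (Or.inl ⟨x + φ (exitVec 2), rfl, ?_⟩))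
    rw [add_assoc, ← map_add]
    simp [exitVec, e₁, ← Prod.zero_eq_mk]
  · refine Or.inr (Or.inr (Or.inr ⟨x + φ (exitVec 3), rfl, ?_⟩))
    rw [add_assoc, ← map_add]
    simp [exitVec, e₂, ← Prod.zero_eq_mk]

theorem exists_eq_add_exitVec_of_addCayley_adj {φ : ℤ × ℤ →+ A} {x y : A}
    (h : (addCayley {φ e₁, φ e₂}).Adj x y) : ∃ i, y = x + φ (exitVec i) := by
  rcases ((SimpleGraph.addCayley_adj _ _ _).1 h).2 with (h | h) | (h | h)
  · exact ⟨0, by rw [show exitVec 0 = e₁ from rfl, ← h]; abel⟩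
  · exact ⟨1, by rw [show exitVec 1 = e₂ from rfl, ← h]; abel⟩
  · exact ⟨2, by rw [show exitVec 2 = -e₁ from rfl, map_neg, ← h]; abel⟩
  · exact ⟨3, by rw [show exitVec 3 = -e₂ from rfl, map_neg, ← h]; abel⟩

theorem truncSquareGraph_reachable_square {E₁ E₂ : A} {S : Finset (A × Fin 4)} (x : A)
    {m : Fin 4} (hm : ∀ j, (x, j) ∈ S → j = m) {i k : Fin 4} (hi : (x, i) ∉ S)
    (hk : (x, k) ∉ S) :
    ((truncSquareGraph E₁ E₂).induce (↑S)ᶜ).Reachable ⟨(x, i), hi⟩ ⟨(x, k), hk⟩ := by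
  have hS (j : Fin 4) (hj : j ≠ m) : (x, j) ∉ S := fun h => hj (hm j h)
  have step {j j' : Fin 4} (h : j' = j + 1) (hj : (x, j) ∉ S) (hj' : (x, j') ∉ S) :
      ((truncSquareGraph E₁ E₂).induce (↑S)ᶜ).Reachable ⟨(x, j), hj⟩ ⟨(x, j'), hj'⟩ :=
    (truncSquareGraph_adj_succ x h).reachable_induce hj hj'
  obtain ⟨hm₁, hm₂, hm₁₂, hm₂₃⟩ :
      m + 1 ≠ m ∧ m + 2 ≠ m ∧ m + 2 = m + 1 + 1 ∧ m + 3 = m + 2 + 1 :=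
    (by decide : ∀ m : Fin 4,
      m + 1 ≠ m ∧ m + 2 ≠ m ∧ m + 2 = m + 1 + 1 ∧ m + 3 = m + 2 + 1) m
  have h₁ := hS (m + 1) hm₁
  have h₂ := hS (m + 2) hm₂
  have key (j : Fin 4) (hj : (x, j) ∉ S) :
      ((truncSquareGraph E₁ E₂).induce (↑S)ᶜ).Reachable ⟨(x, j), hj⟩ ⟨(x, m + 2), h₂⟩ := by
    rcases (by decide : ∀ j m : Fin 4, j = m ∨ j = m + 1 ∨ j = m + 2 ∨ j = m + 3) j m with
      rfl | rfl | rfl | rfl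
    · exact (step rfl hj h₁).trans (step hm₁₂ h₁ h₂)
    · exact step hm₁₂ hj h₂
    · rfl
    · exact (step hm₂₃ h₂ hj).symm
  exact (key i hi).trans (key k hk).symm

variable {φ : ℤ × ℤ →+ A} {S : Finset (A × Fin 4)}

theorem InjectiveOnBlocks.exitVec_ne_zero (hφ : InjectiveOnBlocks φ) (i : Fin 4) :
    φ (exitVec i) ≠ 0 := by
  rw [← map_zero φ]
  exact hφ.ne (by revert i; decide) (by revert i; decide) (by revert i; decide)

theorem InjectiveOnBlocks.exitVec_injective (hφ : InjectiveOnBlocks φ) :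
    Function.Injective fun i => φ (exitVec i) := by
  intro i k h
  have hbox : ∀ i k : Fin 4, ((exitVec i).1 - (exitVec k).1).natAbs ≤ 2 ∧
      ((exitVec i).2 - (exitVec k).2).natAbs ≤ 2 := by decide
  exact (by decide : ∀ i k : Fin 4, exitVec i = exitVec k → i = k) i k
    (hφ _ _ (hbox i k).1 (hbox i k).2 h)

theorem truncSquareGraph_reachable_intact [DecidableEq A] {E₁ E₂ : A} {y : A}
    (hy : y ∉ S.image Prod.fst) (j k : Fin 4) :
    ((truncSquareGraph E₁ E₂).induce (↑S)ᶜ).Reachable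
      ⟨(y, j), notMem_of_notMem_image_fst hy j⟩ ⟨(y, k), notMem_of_notMem_image_fst hy k⟩ :=
  truncSquareGraph_reachable_square (m := 0) y
    (fun j h => absurd h (notMem_of_notMem_image_fst hy j)) _ _

theorem truncSquareGraph_reachable_of_addCayley_adj [DecidableEq A] {x y : A}
    (h : (addCayley {φ e₁, φ e₂}).Adj x y) (hx : x ∉ S.image Prod.fst)
    (hy : y ∉ S.image Prod.fst) :
    ((truncSquareGraph (φ e₁) (φ e₂)).induce (↑S)ᶜ).Reachable
      ⟨(x, 0), notMem_of_notMem_image_fst hx 0⟩ ⟨(y, 0), notMem_of_notMem_image_fst hy 0⟩ := by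
  obtain ⟨i, rfl⟩ := exists_eq_add_exitVec_of_addCayley_adj h
  exact (truncSquareGraph_reachable_intact hx 0 i).trans
    (((truncSquareGraph_adj_exit φ x i).reachable_induce _ _).trans
      (truncSquareGraph_reachable_intact hy _ 0))

theorem truncSquareGraph_exists_reachable_intact [DecidableEq A] (hφ : InjectiveOnBlocks φ)
    (hS : S.card ≤ 2) {v : A × Fin 4} (hv : v ∉ S) :
    ∃ (y : A) (hy : y ∉ S.image Prod.fst),
      ((truncSquareGraph (φ e₁) (φ e₂)).induce (↑S)ᶜ).Reachable
        ⟨v, hv⟩ ⟨(y, 0), notMem_of_notMem_image_fst hy 0⟩ := by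
  obtain ⟨x, i⟩ := v
  by_cases hx : x ∈ S.image Prod.fst
  swap
  · exact ⟨x, hx, truncSquareGraph_reachable_intact hx i 0⟩
  by_cases hy : x + φ (exitVec i) ∈ S.image Prod.fst
  swap
  · exact ⟨_, hy, ((truncSquareGraph_adj_exit φ x i).reachable_induce hv
      (notMem_of_notMem_image_fst hy _)).trans (truncSquareGraph_reachable_intact hy _ 0)⟩
  -- `S` has one vertex `(x, m)` on the square `x` and one behind exit `i`, so leave the square
  -- through an exit `k` other than `i`, from a vertex other than `m`.
  obtain ⟨⟨x', m⟩, hm, rfl : x' = x⟩ := Finset.mem_image.1 hx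
  obtain ⟨⟨y, j⟩, hj, rfl : y = x' + φ (exitVec i)⟩ := Finset.mem_image.1 hy
  have hS' (w : A × Fin 4) (hw : w ∈ S) : w = (x', m) ∨ w = (x' + φ (exitVec i), j) :=
    S.eq_or_eq_of_card_le_two hS hm hj
      (fun h => hφ.exitVec_ne_zero i (by simpa using congrArg Prod.fst h)) hw
  have hsq (j' : Fin 4) (h : (x', j') ∈ S) : j' = m := by
    rcases hS' _ h with h | h
    · exact congrArg Prod.snd h
    · exact absurd (congrArg Prod.fst h) (by simpa using hφ.exitVec_ne_zero i)
  obtain ⟨k, hki, hkm⟩ := (by decide : ∀ i m : Fin 4, ∃ k, k ≠ i ∧ k ≠ m) i m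
  have hk : (x', k) ∉ S := fun h => hkm (hsq k h)
  have hz : x' + φ (exitVec k) ∉ S.image Prod.fst := by
    simp only [Finset.mem_image, not_exists, not_and]
    intro w hw hwk
    rcases hS' w hw with rfl | rfl
    · exact hφ.exitVec_ne_zero k (by simpa using hwk.symm)
    · exact hki (hφ.exitVec_injective (add_left_cancel hwk).symm)
  exact ⟨_, hz, (truncSquareGraph_reachable_square x' hsq hv hk).trans
    (((truncSquareGraph_adj_exit φ x' k).reachable_induce hk
      (notMem_of_notMem_image_fst hz _)).trans (truncSquareGraph_reachable_intact hz _ 0))⟩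

theorem truncSquareGraph_induce_compl_connected (hφ : InjectiveOnBlocks φ)
    (hsurj : Function.Surjective φ) (hS : S.card ≤ 2) :
    ((truncSquareGraph (φ e₁) (φ e₂)).induce (↑S)ᶜ).Connected := by
  classical
  have hgrid := addCayley_induce_compl_connected hφ hsurj (Finset.card_image_le.trans hS)
    (D := S.image Prod.fst)
  obtain ⟨⟨x, hx⟩⟩ := hgrid.nonempty
  refine (connected_iff_exists_forall_reachable _).2
    ⟨⟨(x, 0), notMem_of_notMem_image_fst hx 0⟩, fun ⟨v, hv⟩ => ?_⟩
  obtain ⟨y, hy, hvy⟩ := truncSquareGraph_exists_reachable_intact hφ hS hv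
  exact ((hgrid.preconnected ⟨x, hx⟩ ⟨y, hy⟩).map_of_adj
    (G' := (truncSquareGraph (φ e₁) (φ e₂)).induce (↑S)ᶜ)
    (fun z => ⟨(z.1, 0), notMem_of_notMem_image_fst z.2 0⟩)
    (fun z z' (h : ((addCayley {φ e₁, φ e₂}).induce _).Adj z z') =>
      truncSquareGraph_reachable_of_addCayley_adj h z.2 z'.2)).trans hvy.symm

theorem truncSquareGraph_kConnected_three [Finite A] (hφ : InjectiveOnBlocks φ)
    (hsurj : Function.Surjective φ) : (truncSquareGraph (φ e₁) (φ e₂)).KConnected 3 := by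
  refine ⟨?_, fun S hS => truncSquareGraph_induce_compl_connected hφ hsurj (by omega)⟩
  rw [Nat.card_prod, Nat.card_fin]
  have := Nat.card_pos (α := A)
  omega

end TruncSquare

/-- Every truncated-square torus graph (type `{4,8,8}`) is 3-connected. -/
theorem truncSquareTorusGraph_3connected (L : AddSubgroup (ℤ × ℤ)) (hL : Admissible L) :
    (truncSquareTorusGraph L).KConnected 3 := by
  have : Finite ((ℤ × ℤ) ⧸ L) := hL.1
  refine truncSquareGraph_kConnected_three (φ := QuotientAddGroup.mk' L) (fun p q h₁ h₂ h => ?_)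
    (QuotientAddGroup.mk'_surjective L)
  by_contra hpq
  refine hL.2 (p - q) ?_ (sub_ne_zero.2 hpq) ⟨?_, ?_⟩
  · exact QuotientAddGroup.eq_iff_sub_mem.1 h
  · simp only [Prod.fst_sub, abs_le]; omega
  · simp only [Prod.snd_sub, abs_le]; omega
end
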